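/- arXiv:2402.00383 — 3 statements merged into one kernel-verified Lean document; each statement's English description precedes it below -/
import Mathlib

section
/- Let G be a group and A an F-subspace of F[G] spanned by {underline(D) : D in 𝒟} where 𝒟 is a finite-support partition of G. Then A is a Schur ring over G with basic sets 𝒟 if and only if A is a subring of F[G], A is closed under the Hadamard product ∘ and the inverse map *, {1} lies in 𝒟, and every g in G lies in some D in 𝒟. -/
noncomputable def simpleQuantity (F : Type*) [Field F] {G : Type*} [Group G]
    (D : Finset G) : MonoidAlgebra F G :=
  ∑ g ∈ D, MonoidAlgebra.single g 1

structure SchurRing (F G : Type*) [Field F] [Group G] where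
  parts : Set (Finset G)
  parts_nonempty : ∀ D ∈ parts, D.Nonempty
  cover : ∀ g : G, ∃ D ∈ parts, g ∈ D
  eq_of_mem : ∀ D₁ ∈ parts, ∀ D₂ ∈ parts, ∀ g : G, g ∈ D₁ → g ∈ D₂ → D₁ = D₂
  one_mem : ({1} : Finset G) ∈ parts
  inv_mem : ∀ D ∈ parts, ∃ D' ∈ parts, ∀ g : G, g ∈ D' ↔ g⁻¹ ∈ D
  mul_mem : ∀ x ∈ Submodule.span F (simpleQuantity F '' parts),
    ∀ y ∈ Submodule.span F (simpleQuantity F '' parts),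
    x * y ∈ Submodule.span F (simpleQuantity F '' parts)

noncomputable def SchurRing.span {F G : Type*} [Field F] [Group G] (A : SchurRing F G) :
    Submodule F (MonoidAlgebra F G) :=
  Submodule.span F (simpleQuantity F '' A.parts)

def SchurRing.IsASet {F G : Type*} [Field F] [Group G] (A : SchurRing F G)
    (S : Set G) : Prop :=
  ∀ D ∈ A.parts, (∃ g ∈ D, g ∈ S) → ↑D ⊆ S

/-- The Hadamard (coefficientwise) product on the group algebra. -/
noncomputable def hadamard {F G : Type*} [Field F] [Group G]
    (α β : MonoidAlgebra F G) : MonoidAlgebra F G :=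
  MonoidAlgebra.ofCoeff (Finsupp.zipWith (· * ·) (mul_zero 0) α.coeff β.coeff)

/-- The star map `α ↦ α*` sending `Σ α_g g` to `Σ α_g g⁻¹`. -/
noncomputable def starElt {F G : Type*} [Field F] [Group G]
    (α : MonoidAlgebra F G) : MonoidAlgebra F G :=
  MonoidAlgebra.ofCoeff (Finsupp.mapDomain (·⁻¹) α.coeff)
/-!
Every element of the span `A` of the simple quantities has coefficients constant on each part of
`𝒟`. For the forward direction, the Hadamard product of two simple quantities of parts is that
simple quantity or `0`, and `*` permutes them. For the converse only closure of `𝒟` under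
inversion is missing: if `D ∈ 𝒟` and `E ∈ 𝒟` contains `g⁻¹` for some `g ∈ D`, then `D⁻¹` and
`E⁻¹` have simple quantities in `A`; constancy on parts gives `E ⊆ D⁻¹` and `D ⊆ E⁻¹`.
-/

open scoped Pointwise

section

variable {F G : Type*} [Field F] [Group G]

lemma simpleQuantity_coeff [DecidableEq G] (D : Finset G) (g : G) :
    (simpleQuantity F D).coeff g = if g ∈ D then 1 else 0 := by
  simp [simpleQuantity, MonoidAlgebra.coeff_sum, Finsupp.single_apply]

lemma simpleQuantity_empty : simpleQuantity F (∅ : Finset G) = 0 :=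
  Finset.sum_empty

lemma simpleQuantity_singleton_one : simpleQuantity F ({1} : Finset G) = 1 := by
  simp [simpleQuantity, MonoidAlgebra.one_def]

lemma hadamard_coeff (α β : MonoidAlgebra F G) (g : G) :
    (hadamard α β).coeff g = α.coeff g * β.coeff g := rfl

lemma hadamard_simpleQuantity [DecidableEq G] (D D' : Finset G) :
    hadamard (simpleQuantity F D) (simpleQuantity F D') = simpleQuantity F (D ∩ D') := by
  ext g
  by_cases hg : g ∈ D <;> simp [hadamard_coeff, simpleQuantity_coeff, hg]

variable (F G) in
noncomputable def hadamardBilin :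
    MonoidAlgebra F G →ₗ[F] MonoidAlgebra F G →ₗ[F] MonoidAlgebra F G :=
  LinearMap.mk₂ F hadamard
    (fun _ _ _ => by ext; simp [hadamard_coeff, add_mul])
    (fun _ _ _ => by ext; simp [hadamard_coeff, mul_assoc])
    (fun _ _ _ => by ext; simp [hadamard_coeff, mul_add])
    (fun _ _ _ => by ext; simp [hadamard_coeff, mul_left_comm])

lemma starElt_eq_mapDomainLinearMap (α : MonoidAlgebra F G) :
    starElt α = MonoidAlgebra.mapDomainLinearMap F F (·⁻¹) α := by
  ext; rfl

lemma starElt_simpleQuantity [DecidableEq G] (D : Finset G) :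
    starElt (simpleQuantity F D) = simpleQuantity F D⁻¹ := by
  simp [starElt_eq_mapDomainLinearMap, simpleQuantity]

variable {𝒟 : Set (Finset G)}

variable (F) in
def partConstant (𝒟 : Set (Finset G)) : Submodule F (MonoidAlgebra F G) where
  carrier := {x | ∀ D ∈ 𝒟, ∀ g ∈ D, ∀ h ∈ D, x.coeff g = x.coeff h}
  add_mem' hx hy D hD g hg h hh := by
    simp only [MonoidAlgebra.coeff_add, Finsupp.add_apply, hx D hD g hg h hh, hy D hD g hg h hh]
  zero_mem' _ _ _ _ _ _ := rfl
  smul_mem' c x hx D hD g hg h hh := by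
    simp only [MonoidAlgebra.coeff_smul, Finsupp.smul_apply, hx D hD g hg h hh]

lemma span_le_partConstant
    (hdisj : ∀ D₁ ∈ 𝒟, ∀ D₂ ∈ 𝒟, ∀ g : G, g ∈ D₁ → g ∈ D₂ → D₁ = D₂) :
    Submodule.span F (simpleQuantity F '' 𝒟) ≤ partConstant F 𝒟 := by
  classical
  rw [Submodule.span_le]
  rintro _ ⟨E, hE, rfl⟩ D hD g hg h hh
  rw [simpleQuantity_coeff, simpleQuantity_coeff]
  by_cases hgE : g ∈ E
  · obtain rfl := hdisj D hD E hE g hg hgE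
    simp [hg, hh]
  · have hhE : h ∉ E := fun hhE => hgE (hdisj D hD E hE h hh hhE ▸ hg)
    simp [hgE, hhE]

lemma one_mem_span (hone : ({1} : Finset G) ∈ 𝒟) :
    (1 : MonoidAlgebra F G) ∈ Submodule.span F (simpleQuantity F '' 𝒟) := by
  rw [← simpleQuantity_singleton_one]
  exact Submodule.subset_span ⟨_, hone, rfl⟩

lemma subset_of_simpleQuantity_mem_span
    (hdisj : ∀ D₁ ∈ 𝒟, ∀ D₂ ∈ 𝒟, ∀ g : G, g ∈ D₁ → g ∈ D₂ → D₁ = D₂) {S D : Finset G}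
    (hS : simpleQuantity F S ∈ Submodule.span F (simpleQuantity F '' 𝒟)) (hD : D ∈ 𝒟) {g : G}
    (hgD : g ∈ D) (hgS : g ∈ S) : D ⊆ S := by
  classical
  intro h hh
  have hconst := span_le_partConstant hdisj hS D hD g hgD h hh
  rw [simpleQuantity_coeff, simpleQuantity_coeff, if_pos hgS] at hconst
  by_contra hhS
  rw [if_neg hhS] at hconst
  exact one_ne_zero hconst

lemma hadamard_mem_span
    (hdisj : ∀ D₁ ∈ 𝒟, ∀ D₂ ∈ 𝒟, ∀ g : G, g ∈ D₁ → g ∈ D₂ → D₁ = D₂)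
    {x y : MonoidAlgebra F G} (hx : x ∈ Submodule.span F (simpleQuantity F '' 𝒟))
    (hy : y ∈ Submodule.span F (simpleQuantity F '' 𝒟)) :
    hadamard x y ∈ Submodule.span F (simpleQuantity F '' 𝒟) := by
  classical
  refine LinearMap.BilinMap.apply_apply_mem_of_mem_span _ _ _ (hadamardBilin F G) ?_ x y hx hy
  rintro _ ⟨D, hD, rfl⟩ _ ⟨D', hD', rfl⟩
  change hadamard _ _ ∈ _
  rw [hadamard_simpleQuantity]
  by_cases hDD' : D = D'
  · rw [hDD', Finset.inter_self]
    exact Submodule.subset_span ⟨D', hD', rfl⟩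
  · have hempty : D ∩ D' = ∅ := Finset.eq_empty_of_forall_notMem fun g hg =>
      hDD' (hdisj D hD D' hD' g (Finset.mem_inter.1 hg).1 (Finset.mem_inter.1 hg).2)
    rw [hempty, simpleQuantity_empty]
    exact Submodule.zero_mem _

lemma starElt_mem_span (hinv : ∀ D ∈ 𝒟, ∃ D' ∈ 𝒟, ∀ g : G, g ∈ D' ↔ g⁻¹ ∈ D)
    {x : MonoidAlgebra F G} (hx : x ∈ Submodule.span F (simpleQuantity F '' 𝒟)) :
    starElt x ∈ Submodule.span F (simpleQuantity F '' 𝒟) := by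
  classical
  rw [starElt_eq_mapDomainLinearMap]
  refine Submodule.map_span_le _ _ _ |>.2 ?_ ⟨x, hx, rfl⟩
  rintro _ ⟨D, hD, rfl⟩
  obtain ⟨D', hD', hD'D⟩ := hinv D hD
  rw [← starElt_eq_mapDomainLinearMap, starElt_simpleQuantity,
    show D⁻¹ = D' from Finset.ext fun g => Finset.mem_inv'.trans (hD'D g).symm]
  exact Submodule.subset_span ⟨D', hD', rfl⟩

lemma exists_part_eq_inv
    (hdisj : ∀ D₁ ∈ 𝒟, ∀ D₂ ∈ 𝒟, ∀ g : G, g ∈ D₁ → g ∈ D₂ → D₁ = D₂)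
    (hcover : ∀ g : G, ∃ D ∈ 𝒟, g ∈ D)
    (hstar : ∀ x ∈ Submodule.span F (simpleQuantity F '' 𝒟),
      starElt x ∈ Submodule.span F (simpleQuantity F '' 𝒟))
    {D : Finset G} (hD : D ∈ 𝒟) (hDne : D.Nonempty) :
    ∃ D' ∈ 𝒟, ∀ g : G, g ∈ D' ↔ g⁻¹ ∈ D := by
  classical
  have hinv_mem : ∀ S ∈ 𝒟, simpleQuantity F S⁻¹ ∈ Submodule.span F (simpleQuantity F '' 𝒟) :=
    fun S hS => starElt_simpleQuantity (F := F) S ▸ hstar _ (Submodule.subset_span ⟨S, hS, rfl⟩)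
  obtain ⟨g, hg⟩ := hDne
  obtain ⟨E, hE, hgE⟩ := hcover g⁻¹
  have hED : E ⊆ D⁻¹ :=
    subset_of_simpleQuantity_mem_span hdisj (hinv_mem D hD) hE hgE (by simpa [Finset.mem_inv'])
  have hDE : D ⊆ E⁻¹ :=
    subset_of_simpleQuantity_mem_span hdisj (hinv_mem E hE) hD hg (by simpa [Finset.mem_inv'])
  exact ⟨E, hE, fun h => ⟨fun hh => Finset.mem_inv'.1 (hED hh),
    fun hh => by simpa [Finset.mem_inv'] using hDE hh⟩⟩

end

theorem schurRing_iff_general {F G : Type*} [Field F] [Group G]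
    (𝒟 : Set (Finset G))
    (hne : ∀ D ∈ 𝒟, D.Nonempty)
    (hdisj : ∀ D₁ ∈ 𝒟, ∀ D₂ ∈ 𝒟, ∀ g : G, g ∈ D₁ → g ∈ D₂ → D₁ = D₂) :
    (∃ A : SchurRing F G, A.parts = 𝒟) ↔
      ((1 : MonoidAlgebra F G) ∈ Submodule.span F (simpleQuantity F '' 𝒟) ∧
       (∀ x ∈ Submodule.span F (simpleQuantity F '' 𝒟),
          ∀ y ∈ Submodule.span F (simpleQuantity F '' 𝒟),
          x * y ∈ Submodule.span F (simpleQuantity F '' 𝒟)) ∧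
       (∀ x ∈ Submodule.span F (simpleQuantity F '' 𝒟),
          ∀ y ∈ Submodule.span F (simpleQuantity F '' 𝒟),
          hadamard x y ∈ Submodule.span F (simpleQuantity F '' 𝒟)) ∧
       (∀ x ∈ Submodule.span F (simpleQuantity F '' 𝒟),
          starElt x ∈ Submodule.span F (simpleQuantity F '' 𝒟)) ∧
       ({1} : Finset G) ∈ 𝒟 ∧
       (∀ g : G, ∃ D ∈ 𝒟, g ∈ D)) := by
  constructor
  · rintro ⟨A, rfl⟩
    exact ⟨one_mem_span A.one_mem, A.mul_mem,
      fun _ hx _ hy => hadamard_mem_span hdisj hx hy, fun _ hx => starElt_mem_span A.inv_mem hx,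
      A.one_mem, A.cover⟩
  · rintro ⟨-, hmul, -, hstar, hone, hcover⟩
    exact ⟨⟨𝒟, hne, hcover, hdisj, hone,
      fun D hD => exists_part_eq_inv hdisj hcover hstar hD (hne D hD), hmul⟩, rfl⟩

/-- Wielandt's criterion: the span of the simple quantities of a finite-support
partition `𝒟` is a Schur ring with basic sets `𝒟` iff it is a subring closed
under the Hadamard product and the star map, `{1} ∈ 𝒟`, and `𝒟` covers `G`. -/
theorem schurRing_iff {F G : Type*} [Field F] [CharZero F] [Group G]
    (𝒟 : Set (Finset G))
    (hne : ∀ D ∈ 𝒟, D.Nonempty)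
    (hdisj : ∀ D₁ ∈ 𝒟, ∀ D₂ ∈ 𝒟, ∀ g : G, g ∈ D₁ → g ∈ D₂ → D₁ = D₂) :
    (∃ A : SchurRing F G, A.parts = 𝒟) ↔
      ((1 : MonoidAlgebra F G) ∈ Submodule.span F (simpleQuantity F '' 𝒟) ∧
       (∀ x ∈ Submodule.span F (simpleQuantity F '' 𝒟),
          ∀ y ∈ Submodule.span F (simpleQuantity F '' 𝒟),
          x * y ∈ Submodule.span F (simpleQuantity F '' 𝒟)) ∧
       (∀ x ∈ Submodule.span F (simpleQuantity F '' 𝒟),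
          ∀ y ∈ Submodule.span F (simpleQuantity F '' 𝒟),
          hadamard x y ∈ Submodule.span F (simpleQuantity F '' 𝒟)) ∧
       (∀ x ∈ Submodule.span F (simpleQuantity F '' 𝒟),
          starElt x ∈ Submodule.span F (simpleQuantity F '' 𝒟)) ∧
       ({1} : Finset G) ∈ 𝒟 ∧
       (∀ g : G, ∃ D ∈ 𝒟, g ∈ D)) :=
  schurRing_iff_general 𝒟 hne hdisj
end

section
/- Let A be a Schur ring over a group G and α ∈ A. Then the subgroup H = ⟨supp(α)⟩ generated by the support of α is an A-subgroup (a subgroup of G that is a union of basic sets of A). -/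
/-!
Coefficients of an element of `A` are constant on basic sets, so `supp α` is an `A`-set.
For any subgroup `H`, the union of the basic sets contained in `H` is again a subgroup: it is
closed under products because in characteristic zero the support of `D̲ E̲` is exactly `DE`, which
is therefore an `A`-set. For `H = ⟨supp α⟩` this union contains the `A`-set `supp α`, hence all of
`H`, so `H` is a union of basic sets.
-/

open Pointwise

section simpleQuantity

variable {F G : Type*} [Field F] [Group G]

open Classical in
lemma coeff_simpleQuantity (D : Finset G) (g : G) :
    (simpleQuantity F D).coeff g = if g ∈ D then 1 else 0 := by
  simp [simpleQuantity, MonoidAlgebra.coeff_sum, MonoidAlgebra.coeff_single, Finsupp.single_apply]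

open Classical in
lemma coeff_simpleQuantity_mul (D E : Finset G) (g : G) :
    (simpleQuantity F D * simpleQuantity F E).coeff g =
      ({p ∈ D ×ˢ E | p.1 * p.2 = g} : Finset (G × G)).card := by
  simp_rw [simpleQuantity, Finset.sum_mul_sum, MonoidAlgebra.single_mul_single, mul_one,
    ← Finset.sum_product', MonoidAlgebra.coeff_sum, Finsupp.finsetSum_apply,
    MonoidAlgebra.coeff_single, Finsupp.single_apply, Finset.card_filter]
  push_cast
  rfl

open Classical in
lemma support_simpleQuantity_mul [CharZero F] (D E : Finset G) :
    (simpleQuantity F D * simpleQuantity F E).coeff.support = D * E := by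
  ext g
  rw [Finsupp.mem_support_iff, coeff_simpleQuantity_mul, Nat.cast_ne_zero, Finset.card_ne_zero,
    Finset.filter_nonempty_iff]
  simp [Finset.mem_mul, and_assoc]

end simpleQuantity

namespace SchurRing

variable {F G : Type*} [Field F] [Group G] (A : SchurRing F G)

lemma simpleQuantity_mem_span {D : Finset G} (hD : D ∈ A.parts) : simpleQuantity F D ∈ A.span :=
  Submodule.subset_span ⟨D, hD, rfl⟩

open Classical in
lemma coeff_eq_of_mem_span {x : MonoidAlgebra F G} (hx : x ∈ A.span) {D : Finset G}
    (hD : D ∈ A.parts) {g h : G} (hg : g ∈ D) (hh : h ∈ D) : x.coeff g = x.coeff h := by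
  induction hx using Submodule.span_induction with
  | mem y hy =>
    obtain ⟨E, hE, rfl⟩ := hy
    have hgh : g ∈ E ↔ h ∈ E :=
      ⟨fun hgE ↦ A.eq_of_mem D hD E hE g hg hgE ▸ hh, fun hhE ↦ A.eq_of_mem D hD E hE h hh hhE ▸ hg⟩
    rw [coeff_simpleQuantity, coeff_simpleQuantity]
    exact if_congr hgh rfl rfl
  | zero => rfl
  | add y z _ _ hy hz => simp only [MonoidAlgebra.coeff_add, Finsupp.add_apply, hy, hz]
  | smul c y _ hy => simp only [MonoidAlgebra.coeff_smul, Finsupp.smul_apply, hy]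

lemma isASet_support {x : MonoidAlgebra F G} (hx : x ∈ A.span) : A.IsASet ↑x.coeff.support := by
  rintro D hD ⟨g, hgD, hg⟩ h hh
  simpa [A.coeff_eq_of_mem_span hx hD hh hgD] using hg

lemma isASet_of_forall_mem_subset {S : Set G}
    (hS : ∀ g ∈ S, ∃ D ∈ A.parts, g ∈ D ∧ ↑D ⊆ S) : A.IsASet S := by
  rintro D hD ⟨g, hgD, hgS⟩
  obtain ⟨E, hE, hgE, hES⟩ := hS g hgS
  exact A.eq_of_mem D hD E hE g hgD hgE ▸ hES

variable [CharZero F]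

lemma isASet_mul {D E : Finset G} (hD : D ∈ A.parts) (hE : E ∈ A.parts) :
    A.IsASet (↑D * ↑E) := by
  classical
  have := A.isASet_support (A.mul_mem _ (A.simpleQuantity_mem_span hD)
    _ (A.simpleQuantity_mem_span hE))
  rwa [support_simpleQuantity_mul, Finset.coe_mul] at this

def core (H : Subgroup G) : Subgroup G where
  carrier := {g | ∃ D ∈ A.parts, g ∈ D ∧ ↑D ⊆ (H : Set G)}
  one_mem' := ⟨{1}, A.one_mem, by simp, by simp⟩
  inv_mem' := by
    rintro g ⟨D, hD, hgD, hDH⟩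
    obtain ⟨D', hD', hD'D⟩ := A.inv_mem D hD
    refine ⟨D', hD', (hD'D _).2 (by simpa using hgD), fun h hh ↦ ?_⟩
    simpa using H.inv_mem (hDH ((hD'D h).1 hh))
  mul_mem' := by
    rintro g h ⟨D, hD, hgD, hDH⟩ ⟨E, hE, hhE, hEH⟩
    obtain ⟨C, hC, hghC⟩ := A.cover (g * h)
    exact ⟨C, hC, hghC, (A.isASet_mul hD hE C hC ⟨g * h, hghC, Set.mul_mem_mul hgD hhE⟩).trans
      (Subgroup.mul_subset hDH hEH)⟩

lemma subset_core_of_isASet {H : Subgroup G} {S : Set G} (hS : A.IsASet S) (hSH : S ⊆ H) :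
    S ⊆ A.core H := by
  intro g hg
  obtain ⟨D, hD, hgD⟩ := A.cover g
  exact ⟨D, hD, hgD, (hS D hD ⟨g, hgD, hg⟩).trans hSH⟩

lemma isASet_of_le_core {H : Subgroup G} (hH : H ≤ A.core H) : A.IsASet H :=
  A.isASet_of_forall_mem_subset fun _ hg ↦ hH hg

end SchurRing

/-- The subgroup generated by the support of an element of a Schur ring is an
`A`-subgroup. -/
theorem closure_support_isASet {F G : Type*} [Field F] [CharZero F] [Group G]
    (A : SchurRing F G) (α : MonoidAlgebra F G) (hα : α ∈ A.span) :
    A.IsASet ↑(Subgroup.closure (↑α.coeff.support : Set G)) := by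
  refine A.isASet_of_le_core ((Subgroup.closure_le _).2 ?_)
  exact A.subset_core_of_isASet (A.isASet_support hα) Subgroup.subset_closure
end

section
/- Let G = ⟨a⟩ × ⟨b⟩ be free abelian of rank two, n a nonzero integer, and φ₂ ∈ Aut(G) with φ₂(a) = a^{-1}, φ₂(b) = a^n b. Then φ₂ has order 2, the ⟨φ₂⟩-orbit containing a^i b^j equals {a^i b^j, a^{nj-i} b^j}, and the span of the simple quantities of these orbits is a Schur ring over G. -/
/-- The free abelian group of rank two, written multiplicatively. -/
abbrev Z2 := Multiplicative (ℤ × ℤ)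

/-- The first generator `a` of `Z × Z`. -/
def ga : Z2 := Multiplicative.ofAdd (1, 0)

/-- The second generator `b` of `Z × Z`. -/
def gb : Z2 := Multiplicative.ofAdd (0, 1)

/-!
An involutive automorphism `σ` has orbits `{x, σ x}`. Writing `t x = x + σ x` in `F[G]`, the
orbit sum of `x` is `t x` when `σ x ≠ x` and `x` when `σ x = x`; in either case `t x` lies in the
span of the orbit sums. Since `σ (x * σ y) = σ x * y`, products of orbit sums expand as sums of
elements `t z`, so the span is closed under multiplication. For `φ₂` the map `(i, j) ↦ (n j - i, j)`
on exponents is an involution, which gives the order, the orbits and the Schur ring at once.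
-/

lemma zpow_eq_one_or_self_of_sq_eq_one {M : Type*} [Group M] {g : M} (hg : g ^ 2 = 1) (k : ℤ) :
    g ^ k = 1 ∨ g ^ k = g := by
  rw [zpow_eq_zpow_emod' k hg]
  rcases Int.emod_two_eq_zero_or_one k with h | h <;> simp [h]

lemma MulAction.orbit_zpowers_of_sq_eq_one {M α : Type*} [Group M] [MulAction M α] {g : M}
    (hg : g ^ 2 = 1) (x : α) : MulAction.orbit (Subgroup.zpowers g) x = {x, g • x} := by
  ext y
  constructor
  · rintro ⟨⟨_, k, rfl⟩, rfl⟩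
    rcases zpow_eq_one_or_self_of_sq_eq_one hg k with h | h <;> simp [h, Subgroup.smul_def]
  · rintro (rfl | rfl)
    · exact MulAction.mem_orbit_self y
    · exact ⟨⟨g, Subgroup.mem_zpowers g⟩, rfl⟩

namespace MulAut

variable {G : Type*} [Group G] {σ : MulAut G}

lemma apply_apply_of_sq_eq_one (hσ : σ ^ 2 = 1) (x : G) : σ (σ x) = x := by
  rw [← MulAut.mul_apply, ← sq, hσ, MulAut.one_apply]

lemma pair_eq_pair_of_mem [DecidableEq G] (hσ : σ ^ 2 = 1) {x g : G}
    (hg : g ∈ ({x, σ x} : Finset G)) : ({x, σ x} : Finset G) = {g, σ g} := by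
  rcases Finset.mem_insert.1 hg with rfl | hg
  · rfl
  · rw [Finset.mem_singleton.1 hg, apply_apply_of_sq_eq_one hσ, Finset.pair_comm]

end MulAut

section InvolutionSchurRing

open MonoidAlgebra

variable (F : Type*) [Field F] {G : Type*} [Group G] [DecidableEq G] {σ : MulAut G}

lemma simpleQuantity_pair_of_apply_eq (x : G) (hx : σ x = x) :
    simpleQuantity F ({x, σ x} : Finset G) = single x 1 := by
  rw [hx, Finset.pair_eq_singleton, simpleQuantity, Finset.sum_singleton]

lemma simpleQuantity_pair_of_apply_ne (x : G) (hx : σ x ≠ x) :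
    simpleQuantity F ({x, σ x} : Finset G) = single x 1 + single (σ x) 1 :=
  Finset.sum_pair hx.symm

variable (σ)

noncomputable def pairSpan : Submodule F (MonoidAlgebra F G) :=
  Submodule.span F (Set.range fun x : G ↦ simpleQuantity F ({x, σ x} : Finset G))

variable {F}

lemma single_add_single_apply_mem_pairSpan (x : G) :
    single x (1 : F) + single (σ x) 1 ∈ pairSpan F σ := by
  have hmem : simpleQuantity F ({x, σ x} : Finset G) ∈ pairSpan F σ :=
    Submodule.subset_span ⟨x, rfl⟩
  by_cases hx : σ x = x
  · rw [simpleQuantity_pair_of_apply_eq F x hx] at hmem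
    rw [hx]
    exact add_mem hmem hmem
  · rwa [simpleQuantity_pair_of_apply_ne F x hx] at hmem

lemma simpleQuantity_pair_mul_mem_pairSpan (hσ : σ ^ 2 = 1) (x y : G) :
    simpleQuantity F ({x, σ x} : Finset G) * simpleQuantity F ({y, σ y} : Finset G) ∈
      pairSpan F σ := by
  rcases eq_or_ne (σ x) x with hx | hx <;> rcases eq_or_ne (σ y) y with hy | hy
  · rw [simpleQuantity_pair_of_apply_eq F x hx, simpleQuantity_pair_of_apply_eq F y hy,
      single_mul_single, one_mul, ← simpleQuantity_pair_of_apply_eq F (x * y)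
        (show σ (x * y) = x * y by rw [map_mul, hx, hy])]
    exact Submodule.subset_span ⟨x * y, rfl⟩
  · rw [simpleQuantity_pair_of_apply_eq F x hx, simpleQuantity_pair_of_apply_ne F y hy]
    convert single_add_single_apply_mem_pairSpan σ (x * y) using 1
    simp [mul_add, single_mul_single, hx]
  · rw [simpleQuantity_pair_of_apply_ne F x hx, simpleQuantity_pair_of_apply_eq F y hy]
    convert single_add_single_apply_mem_pairSpan σ (x * y) using 1
    simp [add_mul, single_mul_single, hy]
  · rw [simpleQuantity_pair_of_apply_ne F x hx, simpleQuantity_pair_of_apply_ne F y hy]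
    convert add_mem (single_add_single_apply_mem_pairSpan σ (x * y))
      (single_add_single_apply_mem_pairSpan σ (x * σ y)) using 1
    simp only [add_mul, mul_add, single_mul_single, one_mul, map_mul,
      MulAut.apply_apply_of_sq_eq_one hσ]
    abel

lemma mul_mem_pairSpan (hσ : σ ^ 2 = 1) {a b : MonoidAlgebra F G}
    (ha : a ∈ pairSpan F σ) (hb : b ∈ pairSpan F σ) : a * b ∈ pairSpan F σ := by
  have hle : pairSpan F σ * pairSpan F σ ≤ pairSpan F σ := by
    rw [pairSpan, Submodule.span_mul_span, Submodule.span_le]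
    rintro _ ⟨_, ⟨x, rfl⟩, _, ⟨y, rfl⟩, rfl⟩
    exact simpleQuantity_pair_mul_mem_pairSpan σ hσ x y
  exact hle (Submodule.mul_mem_mul ha hb)

variable (F)

def SchurRing.ofSqEqOne (hσ : σ ^ 2 = 1) : SchurRing F G where
  parts := {D | ∃ x, D = {x, σ x}}
  parts_nonempty := by
    rintro _ ⟨x, rfl⟩
    exact Finset.insert_nonempty _ _
  cover g := ⟨{g, σ g}, ⟨g, rfl⟩, Finset.mem_insert_self _ _⟩
  eq_of_mem := by
    rintro _ ⟨x, rfl⟩ _ ⟨y, rfl⟩ g hx hy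
    rw [MulAut.pair_eq_pair_of_mem hσ hx, MulAut.pair_eq_pair_of_mem hσ hy]
  one_mem := ⟨1, by rw [map_one, Finset.pair_eq_singleton]⟩
  inv_mem := by
    rintro _ ⟨x, rfl⟩
    refine ⟨{x⁻¹, σ x⁻¹}, ⟨x⁻¹, rfl⟩, fun g ↦ ?_⟩
    simp only [Finset.mem_insert, Finset.mem_singleton, map_inv, inv_eq_iff_eq_inv]
  mul_mem := by
    have hparts : simpleQuantity F '' {D : Finset G | ∃ x, D = {x, σ x}} =
        Set.range fun x : G ↦ simpleQuantity F ({x, σ x} : Finset G) := by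
      ext; simp [eq_comm]
    simp only [hparts]
    exact fun a ha b hb ↦ mul_mem_pairSpan σ hσ ha hb

end InvolutionSchurRing

def phi₂Add (n : ℤ) : (ℤ × ℤ) ≃+ (ℤ × ℤ) where
  toFun p := (n * p.2 - p.1, p.2)
  invFun p := (n * p.2 - p.1, p.2)
  left_inv p := by simp
  right_inv p := by simp
  map_add' p q := Prod.ext (by simp only [Prod.fst_add, Prod.snd_add]; ring) rfl

def phi₂ (n : ℤ) : MulAut Z2 := AddEquiv.toMultiplicative (phi₂Add n)

lemma ga_zpow_mul_gb_zpow (i j : ℤ) : ga ^ i * gb ^ j = Multiplicative.ofAdd (i, j) := by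
  simp [ga, gb, ← ofAdd_zsmul, ← ofAdd_add]

lemma exists_eq_ga_zpow_mul_gb_zpow (x : Z2) : ∃ i j : ℤ, x = ga ^ i * gb ^ j :=
  ⟨x.toAdd.1, x.toAdd.2, by rw [ga_zpow_mul_gb_zpow]; rfl⟩

lemma phi₂_ga_zpow_mul_gb_zpow (n i j : ℤ) :
    phi₂ n (ga ^ i * gb ^ j) = ga ^ (n * j - i) * gb ^ j := by
  rw [ga_zpow_mul_gb_zpow, ga_zpow_mul_gb_zpow]
  rfl

lemma phi₂_ga (n : ℤ) : phi₂ n ga = ga⁻¹ := by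
  simpa using phi₂_ga_zpow_mul_gb_zpow n 1 0

lemma phi₂_gb (n : ℤ) : phi₂ n gb = ga ^ n * gb := by
  simpa using phi₂_ga_zpow_mul_gb_zpow n 0 1

lemma phi₂_sq (n : ℤ) : phi₂ n ^ 2 = 1 := by
  refine MulEquiv.ext fun x ↦ ?_
  obtain ⟨i, j, rfl⟩ := exists_eq_ga_zpow_mul_gb_zpow x
  simp [sq, phi₂_ga_zpow_mul_gb_zpow]

lemma orderOf_phi₂ (n : ℤ) : orderOf (phi₂ n) = 2 := by
  refine orderOf_eq_prime (phi₂_sq n) fun h ↦ ?_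
  have hga := phi₂_ga n
  rw [h, MulAut.one_apply, eq_inv_iff_mul_eq_one, ga] at hga
  exact absurd (congrArg (·.toAdd.1) hga) (by decide)

theorem orbit_schurRing_phi2_general (F : Type*) [Field F] (n : ℤ) :
    ∃ φ : MulAut Z2, φ ga = ga⁻¹ ∧ φ gb = ga ^ n * gb ∧ orderOf φ = 2 ∧
      (∀ i j : ℤ, MulAction.orbit (Subgroup.zpowers φ) (ga ^ i * gb ^ j) =
        ({ga ^ i * gb ^ j, ga ^ (n * j - i) * gb ^ j} : Set Z2)) ∧
      ∃ A : SchurRing F Z2, A.parts =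
        {D : Finset Z2 | ∃ i j : ℤ,
          D = {ga ^ i * gb ^ j, ga ^ (n * j - i) * gb ^ j}} := by
  refine ⟨phi₂ n, phi₂_ga n, phi₂_gb n, orderOf_phi₂ n, fun i j ↦ ?_,
    SchurRing.ofSqEqOne F (phi₂ n) (phi₂_sq n), ?_⟩
  · rw [MulAction.orbit_zpowers_of_sq_eq_one (phi₂_sq n), MulAut.smul_def, phi₂_ga_zpow_mul_gb_zpow]
  · ext D
    constructor
    · rintro ⟨x, rfl⟩
      obtain ⟨i, j, rfl⟩ := exists_eq_ga_zpow_mul_gb_zpow x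
      exact ⟨i, j, by rw [phi₂_ga_zpow_mul_gb_zpow]⟩
    · rintro ⟨i, j, rfl⟩
      exact ⟨ga ^ i * gb ^ j, by rw [phi₂_ga_zpow_mul_gb_zpow]⟩

/-- The automorphism `φ₂` with `φ₂(a) = a⁻¹`, `φ₂(b) = a^n b` has order two,
orbits `{a^i b^j, a^{nj-i} b^j}`, and these yield an (orbit) Schur ring. -/
theorem orbit_schurRing_phi2 (F : Type*) [Field F] [CharZero F] (n : ℤ) (hn : n ≠ 0) :
    ∃ φ : MulAut Z2, φ ga = ga⁻¹ ∧ φ gb = ga ^ n * gb ∧ orderOf φ = 2 ∧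
      (∀ i j : ℤ, MulAction.orbit (Subgroup.zpowers φ) (ga ^ i * gb ^ j) =
        ({ga ^ i * gb ^ j, ga ^ (n * j - i) * gb ^ j} : Set Z2)) ∧
      ∃ A : SchurRing F Z2, A.parts =
        {D : Finset Z2 | ∃ i j : ℤ,
          D = {ga ^ i * gb ^ j, ga ^ (n * j - i) * gb ^ j}} :=
  orbit_schurRing_phi2_general F n
end
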